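/- arXiv:1511.07627 — 2 statements merged into one kernel-verified Lean document; each statement's English description precedes it below -/
import Mathlib

section
/- Let K be algebraically closed and I = (f_1, …, f_r) ⊴ K[x]. Suppose for each 1 ≤ i ≤ r that h_i ∈ K[x] and l_i ∈ ℕ satisfy det(v)^{l_i} · f_i(v⁻¹) = h_i(v) for all v ∈ GL(n, K), and set k_i = det(x)·h_i ∈ K[x]. Then V*(I) is closed under inversion (v ∈ V*(I) implies v⁻¹ ∈ V*(I)) if and only if k_i(v) = 0 for all 1 ≤ i ≤ r and all v ∈ V(I). -/
open MvPolynomial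

/-- Evaluation of a polynomial in the `n²` indeterminates at an `n × n` matrix. -/
noncomputable def matEval {n : ℕ} {K : Type*} [Field K] (v : Matrix (Fin n) (Fin n) K) :
    MvPolynomial (Fin n × Fin n) K →+* K :=
  MvPolynomial.eval (fun p => v p.1 p.2)

/-- `V(I)`: the matrices annihilating every polynomial of `I`. -/
def Vset {n : ℕ} {K : Type*} [Field K] (I : Ideal (MvPolynomial (Fin n × Fin n) K)) :
    Set (Matrix (Fin n) (Fin n) K) :=
  {v | ∀ f ∈ I, matEval v f = 0}

/-- `V*(I) = V(I) ∩ GL(n,K)`: the invertible matrices in `V(I)`. -/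
def Vstar {n : ℕ} {K : Type*} [Field K] (I : Ideal (MvPolynomial (Fin n × Fin n) K)) :
    Set (Matrix (Fin n) (Fin n) K) :=
  {v | v ∈ Vset I ∧ IsUnit v}

/-- `det(x)`, the determinant of the matrix of indeterminates. -/
noncomputable def detPoly (n : ℕ) (K : Type*) [Field K] : MvPolynomial (Fin n × Fin n) K :=
  (Matrix.of fun i j => MvPolynomial.X (i, j)).det



lemma matEval_detPoly {n : ℕ} {K : Type*} [Field K] (v : Matrix (Fin n) (Fin n) K) :
    matEval v (detPoly n K) = v.det := by
  unfold matEval detPoly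
  rw [RingHom.map_det]
  congr 1
  ext i j
  simp [Matrix.map_apply]

/-- `V*(I)` is closed under inversion iff `kᵢ(v) = 0` for all `i` and all `v ∈ V(I)`,
where `kᵢ = det(x)·hᵢ` and `det(v)^{lᵢ} · fᵢ(v⁻¹) = hᵢ(v)` for all invertible `v`. -/
theorem stmt7 {n : ℕ} (hn : 1 ≤ n) {K : Type*} [Field K] [IsAlgClosed K]
    (r : ℕ) (f h k : Fin r → MvPolynomial (Fin n × Fin n) K) (l : Fin r → ℕ)
    (I : Ideal (MvPolynomial (Fin n × Fin n) K)) (hI : I = Ideal.span (Set.range f))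
    (hfh : ∀ i : Fin r, ∀ v : Matrix (Fin n) (Fin n) K, IsUnit v →
      v.det ^ l i * matEval v⁻¹ (f i) = matEval v (h i))
    (hk : ∀ i : Fin r, k i = detPoly n K * h i) :
    (∀ v ∈ Vstar I, v⁻¹ ∈ Vstar I) ↔
      (∀ i : Fin r, ∀ v ∈ Vset I, matEval v (k i) = 0) := by
  constructor
  · intro hcl i v hv
    rw [hk i, map_mul, matEval_detPoly]
    by_cases hd : v.det = 0
    · rw [hd, zero_mul]
    · have hu : IsUnit v := (Matrix.isUnit_iff_isUnit_det v).2 (isUnit_iff_ne_zero.2 hd)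
      have hvi : v⁻¹ ∈ Vstar I := hcl v ⟨hv, hu⟩
      have hf : matEval v⁻¹ (f i) = 0 := hvi.1 (f i) (by
        rw [hI]; exact Ideal.subset_span (Set.mem_range_self i))
      have := hfh i v hu
      rw [hf, mul_zero] at this
      rw [← this, mul_zero]
  · intro hz v hv
    have hu : IsUnit v := hv.2
    have hd : v.det ≠ 0 := by
      intro h0
      exact (isUnit_iff_ne_zero.1 ((Matrix.isUnit_iff_isUnit_det v).1 hu)) h0
    refine ⟨?_, Matrix.isUnit_nonsing_inv_iff.2 hu⟩
    intro g hg
    have hker : I ≤ RingHom.ker (matEval v⁻¹) := by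
      rw [hI, Ideal.span_le]
      rintro _ ⟨i, rfl⟩
      have hki := hz i v hv.1
      rw [hk i, map_mul, matEval_detPoly] at hki
      have hh : matEval v (h i) = 0 := by
        rcases mul_eq_zero.1 hki with h1 | h1
        · exact absurd h1 hd
        · exact h1
      have := hfh i v hu
      rw [hh] at this
      have : matEval v⁻¹ (f i) = 0 := by
        rcases mul_eq_zero.1 this with h1 | h1
        · exact absurd (pow_eq_zero_iff'.mp h1).1 hd
        · exact h1
      exact this
    exact hker hg
end

section
/- Let n = 2 and let f_1 = x_3, f_2 = x_2(x_2 x_4 − 1), f_3 = x_1 x_2 in K[x_1, x_2, x_3, x_4], with I = (f_1, f_2, f_3), where K is a field with more than 3 elements (e.g. algebraically closed). Then V*(I) is closed under matrix multiplication, while V(I) is not closed under matrix multiplication. -/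
open MvPolynomial

/-- For `n = 2`, `f₁ = x₃`, `f₂ = x₂(x₂x₄ − 1)`, `f₃ = x₁x₂` over a field with
more than `3` elements: `V*(I)` is closed under matrix multiplication, while
`V(I)` is not. -/
theorem stmt16 {K : Type*} [Field K] (hK : 3 < Cardinal.mk K)
    (f₁ f₂ f₃ : MvPolynomial (Fin 2 × Fin 2) K)
    (hf₁ : f₁ = MvPolynomial.X (1, 0))
    (hf₂ : f₂ = MvPolynomial.X (0, 1) * (MvPolynomial.X (0, 1) * MvPolynomial.X (1, 1) - 1))
    (hf₃ : f₃ = MvPolynomial.X (0, 0) * MvPolynomial.X (0, 1))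
    (I : Ideal (MvPolynomial (Fin 2 × Fin 2) K)) (hI : I = Ideal.span {f₁, f₂, f₃}) :
    (∀ v ∈ Vstar I, ∀ w ∈ Vstar I, v * w ∈ Vstar I) ∧
      ¬ (∀ v ∈ Vset I, ∀ w ∈ Vset I, v * w ∈ Vset I) := by
  have key : ∀ v : Matrix (Fin 2) (Fin 2) K, v ∈ Vset I ↔
      (v 1 0 = 0 ∧ v 0 1 * (v 0 1 * v 1 1 - 1) = 0 ∧ v 0 0 * v 0 1 = 0) := by
    intro v
    constructor
    · intro hv
      refine ⟨?_, ?_, ?_⟩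
      · have := hv f₁ (by rw [hI]; exact Ideal.subset_span (by simp))
        simpa [hf₁, matEval] using this
      · have := hv f₂ (by rw [hI]; exact Ideal.subset_span (by simp))
        simpa [hf₂, matEval] using this
      · have := hv f₃ (by rw [hI]; exact Ideal.subset_span (by simp))
        simpa [hf₃, matEval] using this
    · rintro ⟨h1, h2, h3⟩ f hf
      rw [hI] at hf
      have hle : Ideal.span {f₁, f₂, f₃} ≤ RingHom.ker (matEval v) := by
        rw [Ideal.span_le]
        rintro g hg
        simp only [Set.mem_insert_iff, Set.mem_singleton_iff] at hg
        rcases hg with rfl | rfl | rfl <;>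
          simp [RingHom.mem_ker, hf₁, hf₂, hf₃, matEval, h1, h2, h3]
      exact hle hf
  constructor
  · rintro v ⟨hv, hvu⟩ w ⟨hw, hwu⟩
    obtain ⟨hv1, hv2, hv3⟩ := (key v).1 hv
    obtain ⟨hw1, hw2, hw3⟩ := (key w).1 hw
    have hdv : v.det ≠ 0 := by
      rw [← isUnit_iff_ne_zero, ← Matrix.isUnit_iff_isUnit_det]; exact hvu
    have hdw : w.det ≠ 0 := by
      rw [← isUnit_iff_ne_zero, ← Matrix.isUnit_iff_isUnit_det]; exact hwu
    rw [Matrix.det_fin_two, hv1, mul_zero, sub_zero] at hdv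
    rw [Matrix.det_fin_two, hw1, mul_zero, sub_zero] at hdw
    have hv00 : v 0 0 ≠ 0 := fun h => hdv (by rw [h, zero_mul])
    have hw00 : w 0 0 ≠ 0 := fun h => hdw (by rw [h, zero_mul])
    have hvb : v 0 1 = 0 := by
      rcases mul_eq_zero.1 hv3 with h | h
      · exact absurd h hv00
      · exact h
    have hwb : w 0 1 = 0 := by
      rcases mul_eq_zero.1 hw3 with h | h
      · exact absurd h hw00
      · exact h
    refine ⟨(key _).2 ⟨?_, ?_, ?_⟩, hvu.mul hwu⟩ <;>
      simp [Matrix.mul_apply, Fin.sum_univ_two, hv1, hw1, hvb, hwb]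
  · intro h
    have hv : (!![(1:K),0;0,0]) ∈ Vset I := (key _).2 (by norm_num)
    have hw : (!![(0:K),1;0,1]) ∈ Vset I := (key _).2 (by norm_num)
    have := ((key _).1 (h _ hv _ hw)).2.1
    rw [show (!![(1:K),0;0,0]) * (!![(0:K),1;0,1]) = !![(0:K),1;0,0] by
      rw [Matrix.mul_fin_two]; norm_num] at this
    norm_num at this
end
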